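/- There is an injection of classical link types into the set of planar pseudo link types: the map sending a classical link diagram (a pseudo link diagram with no precrossings) to its pseudo link equivalence class is well defined and injective on classical link types; that is, two classical link diagrams are classically Reidemeister equivalent if and only if they are pseudo Reidemeister equivalent. -/

import Mathlib

/-!
# A common framework for planar, annular and toroidal pseudo knot theory

Pseudo link diagrams on a surface `S` are modelled as finite families of closed
curves (continuous loops) in `S` having finitely many double points, where each
double point either carries over/under information (a classical crossing,
recorded by pointing at the parameter of the over-strand) or carries none
(a precrossing).  Equivalence of diagrams is generated by ambient surface
isotopy together with local moves supported in an embedded disc; the local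
pictures of the classical Reidemeister moves R1, R2, R3, of the pseudo
Reidemeister moves PR1, PR2, PR3, PR3', and of the mixed Reidemeister moves
MR2, MR3, MPR3 are rendered combinatorially by the number of boundary points
and the numbers of classical crossings and precrossings occurring inside the
supporting disc on either side of the move.

Spatial pseudo links in a 3-manifold `M` are families of embedded closed
curves together with finitely many rigid embedded discs supporting the
precrossings (the two strands through a precrossing disc are the two diameters
of the model disc); isotopy is ambient isotopy respecting arcs and discs.
-/

noncomputable section
namespace PKT
open Set Topology

/-- The parameter circle `S¹ = ℝ/ℤ`. -/
abbrev S1 : Type := AddCircle (1 : ℝ)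
/-- The plane. -/
abbrev Plane : Type := ℝ × ℝ
/-- The (open) annulus `S¹ × D¹`. -/
abbrev Annulus : Type := S1 × ℝ
/-- The torus `S¹ × S¹`. -/
abbrev Torus : Type := S1 × S1
/-- The unit interval. -/
abbrev I01 : Type := unitInterval
/-- Three-space. -/
abbrev Space : Type := Plane × ℝ
/-- The three-sphere, as the one-point compactification of three-space. -/
abbrev S3 : Type := OnePoint Space

/-- Inclusion of three-space in the three-sphere. -/
def toS3 (x : Space) : S3 := (x : S3)

/-- The standard parametrization of the Euclidean unit circle in the plane. -/
def circleMapE : S1 → Plane :=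
  Function.Periodic.lift (f := fun t : ℝ => (Real.cos (2 * Real.pi * t), Real.sin (2 * Real.pi * t)))
    (by
      intro x
      have h1 : 2 * Real.pi * (x + 1) = 2 * Real.pi * x + 2 * Real.pi := by ring
      simp [h1, Real.cos_add_two_pi, Real.sin_add_two_pi])

/-- The set of double points of a finite family of closed curves in `S`. -/
def doublePts {S : Type} [TopologicalSpace S] {n : ℕ} (c : Fin n → C(S1, S)) : Set S :=
  {p | ∃ x y : Fin n × S1, x ≠ y ∧ c x.1 x.2 = p ∧ c y.1 y.2 = p}

/-- A pseudo link diagram in the surface `S`: finitely many closed curves with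
finitely many (transversal) double points, each double point being either a
precrossing (no over/under information, `over p = none`) or a classical
crossing (`over p = some x`, where `x` is the parameter of the over-strand). -/
structure PseudoDiagram (S : Type) [TopologicalSpace S] where
  n : ℕ
  comp : Fin n → C(S1, S)
  overStr : S → Option (Fin n × S1)
  finite_doubles : (doublePts comp).Finite
  two_fold : ∀ p ∈ doublePts comp, {x : Fin n × S1 | comp x.1 x.2 = p}.ncard = 2
  over_spec : ∀ p x, overStr p = some x → comp x.1 x.2 = p ∧ p ∈ doublePts comp

namespace PseudoDiagram

variable {S : Type} [TopologicalSpace S]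

/-- The underlying subset of `S` traced out by the diagram. -/
def union (D : PseudoDiagram S) : Set S := ⋃ i, Set.range (D.comp i)

/-- The double points of the diagram. -/
def doubles (D : PseudoDiagram S) : Set S := doublePts D.comp

/-- The precrossings of the diagram. -/
def preSet (D : PseudoDiagram S) : Set S := {p | p ∈ D.doubles ∧ D.overStr p = none}

/-- The classical crossings of the diagram. -/
def classicalSet (D : PseudoDiagram S) : Set S := {p | p ∈ D.doubles ∧ D.overStr p ≠ none}

/-- A classical link diagram is a pseudo link diagram with no precrossings. -/
def IsClassical (D : PseudoDiagram S) : Prop := D.preSet = ∅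

/-- `D2` is the image of `D1` under the homeomorphism `h` (crossing labels
transported along `h`). -/
def MappedBy (h : S ≃ₜ S) (D1 D2 : PseudoDiagram S) : Prop :=
  ∃ e : Fin D1.n ≃ Fin D2.n,
    (∀ i t, D2.comp (e i) t = h (D1.comp i t)) ∧
    (∀ p, D2.overStr (h p) = Option.map (fun x : Fin D1.n × S1 => (e x.1, x.2)) (D1.overStr p))

/-- `D1` and `D2` are related by an ambient isotopy of the surface `S`
which fixes the subset `F` pointwise at all times. -/
def IsotopicFixing (F : Set S) (D1 D2 : PseudoDiagram S) : Prop :=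
  ∃ H : C(I01 × S, S),
    (∀ s, H (0, s) = s) ∧
    (∀ t, ∃ h : S ≃ₜ S, ∀ s, H (t, s) = h s) ∧
    (∀ t, ∀ s ∈ F, H (t, s) = s) ∧
    ∃ h : S ≃ₜ S, (∀ s, H (1, s) = h s) ∧ MappedBy h D1 D2

/-- Ambient (surface) isotopy of diagrams. -/
def SurfaceIsotopic (D1 D2 : PseudoDiagram S) : Prop := IsotopicFixing ∅ D1 D2

/-- The model disc (a closed topological disc). -/
def ModelDisc : Set Plane := Metric.closedBall 0 1

/-- The centre of the model disc. -/
def discCenter : ModelDisc := ⟨0, Metric.mem_closedBall_self (by norm_num)⟩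

/-- The two diameters of the model disc (the local picture of the two strands
passing through a rigid precrossing disc). -/
def diamPts : Set ModelDisc := {q | (q : Plane).1 = 0 ∨ (q : Plane).2 = 0}

/-- The diagrams `D1` and `D2` agree outside the embedded disc `B`. -/
def SupportedIn (D1 D2 : PseudoDiagram S) (B : Set S) : Prop :=
  (∃ φ : C(ModelDisc, S), Function.Injective φ ∧ Set.range φ = B) ∧
  D1.union \ B = D2.union \ B ∧
  D1.doubles \ B = D2.doubles \ B ∧
  (∀ p ∉ B, (D1.overStr p = none ↔ D2.overStr p = none)) ∧
  frontier B ∩ D1.union = frontier B ∩ D2.union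

/-- The local pattern of a diagram inside a disc `B`: the number of classical
crossings and the number of precrossings lying in `B`. -/
def LocalPattern (D : PseudoDiagram S) (B : Set S) (cp : ℕ × ℕ) : Prop :=
  (D.classicalSet ∩ B).ncard = cp.1 ∧ (D.preSet ∩ B).ncard = cp.2

end PseudoDiagram

/-- The kinds of elementary moves: the classical Reidemeister moves, the pseudo
Reidemeister moves, and the mixed Reidemeister moves. -/
inductive MoveKind : Type
  | r1 | r2 | r3 | pr1 | pr2 | pr3 | pr3' | mr2 | mr3 | mpr3

namespace MoveKind

/-- Combinatorial rendering of the two local pictures of each move: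
`((c₁,p₁), (c₂,p₂), b)` records that one side of the move exhibits `c₁`
classical crossings and `p₁` precrossings inside the supporting disc, the
other side `c₂` classical crossings and `p₂` precrossings, and that the
diagram meets the boundary of the supporting disc in `b` points. -/
def pattern : MoveKind → (ℕ × ℕ) × (ℕ × ℕ) × ℕ
  | .r1 => ((0, 0), (1, 0), 2)
  | .r2 => ((0, 0), (2, 0), 4)
  | .r3 => ((3, 0), (3, 0), 6)
  | .pr1 => ((0, 0), (0, 1), 2)
  | .pr2 => ((0, 0), (1, 1), 4)
  | .pr3 => ((2, 1), (2, 1), 6)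
  | .pr3' => ((2, 1), (2, 1), 6)
  | .mr2 => ((0, 0), (2, 0), 4)
  | .mr3 => ((3, 0), (3, 0), 6)
  | .mpr3 => ((2, 1), (2, 1), 6)

end MoveKind

namespace PseudoDiagram

variable {S : Type} [TopologicalSpace S]

/-- `D1` and `D2` differ by a single elementary move of kind `k`, supported in
an embedded disc `B` satisfying the side condition `P`. -/
def IsMoveTo (k : MoveKind) (P : Set S → Prop) (D1 D2 : PseudoDiagram S) : Prop :=
  ∃ B : Set S, P B ∧ SupportedIn D1 D2 B ∧
    (frontier B ∩ D1.union).ncard = k.pattern.2.2 ∧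
    ((LocalPattern D1 B k.pattern.1 ∧ LocalPattern D2 B k.pattern.2.1) ∨
      (LocalPattern D2 B k.pattern.1 ∧ LocalPattern D1 B k.pattern.2.1))

/-- The moves generating pseudo Reidemeister equivalence. -/
def pseudoKinds : Set MoveKind :=
  {MoveKind.r1, MoveKind.r2, MoveKind.r3, MoveKind.pr1, MoveKind.pr2, MoveKind.pr3, MoveKind.pr3'}

/-- The moves generating classical Reidemeister equivalence. -/
def classicalKinds : Set MoveKind := {MoveKind.r1, MoveKind.r2, MoveKind.r3}

/-- The moves generating singular link equivalence (all pseudo moves except PR1). -/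
def singularKinds : Set MoveKind :=
  {MoveKind.r1, MoveKind.r2, MoveKind.r3, MoveKind.pr2, MoveKind.pr3, MoveKind.pr3'}

/-- The mixed Reidemeister moves. -/
def mixedKinds : Set MoveKind := {MoveKind.mr2, MoveKind.mr3, MoveKind.mpr3}

/-- The mixed Reidemeister moves not involving precrossings. -/
def classicalMixedKinds : Set MoveKind := {MoveKind.mr2, MoveKind.mr3}

/-- The equivalence relation on diagrams in `S` generated by surface isotopy
together with the elementary moves of the kinds in `ks`. -/
def EquivBy (ks : Set MoveKind) (D1 D2 : PseudoDiagram S) : Prop :=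
  Relation.EqvGen
    (fun A B => SurfaceIsotopic A B ∨ ∃ k ∈ ks, IsMoveTo k (fun _ => True) A B) D1 D2

/-- Pseudo Reidemeister equivalence: the equivalence generated by surface
isotopy and the moves R1, R2, R3, PR1, PR2, PR3, PR3'. -/
def PseudoEquiv : PseudoDiagram S → PseudoDiagram S → Prop := EquivBy pseudoKinds

/-- Classical Reidemeister equivalence: generated by surface isotopy and
R1, R2, R3. -/
def ClassicalEquiv : PseudoDiagram S → PseudoDiagram S → Prop := EquivBy classicalKinds

/-- Singular link equivalence: generated by surface isotopy and all of the
above moves except PR1 (precrossings read as rigid singular crossings). -/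
def SingularEquiv : PseudoDiagram S → PseudoDiagram S → Prop := EquivBy singularKinds

/-! ### Resolutions and the weighted resolution set -/

/-- A choice of resolution data: for every precrossing, a choice of one of the
two strands through it (the strand that is to become the over-strand). -/
def Choices (D : PseudoDiagram S) : Set (S → Option (Fin D.n × S1)) :=
  {c | ∀ p : S,
    (p ∈ D.preSet → ∃ x, c p = some x ∧ D.comp x.1 x.2 = p) ∧ (p ∉ D.preSet → c p = none)}

/-- `D'` is the resolution of `D` determined by the choice `c`: same underlying
curves, all classical crossings keep their labels, and every precrossing `p`
becomes a classical crossing whose over-strand is `c p`. -/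
def Resolves (D : PseudoDiagram S) (c : S → Option (Fin D.n × S1)) (D' : PseudoDiagram S) :
    Prop :=
  ∃ e : Fin D.n ≃ Fin D'.n,
    (∀ i t, D'.comp (e i) t = D.comp i t) ∧
    (∀ p x, D.overStr p = some x → D'.overStr p = some (e x.1, x.2)) ∧
    (∀ p x, c p = some x → D'.overStr p = some (e x.1, x.2)) ∧
    (∀ p, D.overStr p = none → c p = none → D'.overStr p = none)

/-- The weighted resolution set (WeRe set) of a pseudo link diagram: the set of
pairs `(q, μ)` where `q` is the classical equivalence class of some resolution
of `D` and `μ` is the probability of obtaining `q` by resolving every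
precrossing independently with equal likelihood `1/2`. -/
def WeRe (D : PseudoDiagram S) : Set (Quot (ClassicalEquiv (S := S)) × ℝ) :=
  {x | (∃ c ∈ D.Choices, ∃ D' : PseudoDiagram S,
          D.Resolves c D' ∧ Quot.mk ClassicalEquiv D' = x.1) ∧
    x.2 = (({c | c ∈ D.Choices ∧ ∃ D' : PseudoDiagram S,
              D.Resolves c D' ∧ Quot.mk ClassicalEquiv D' = x.1}).ncard : ℝ) /
            2 ^ D.preSet.ncard}

end PseudoDiagram

/-! ### Spatial pseudo links -/

/-- A spatial pseudo link in the 3-manifold `M`: finitely many closed curves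
together with finitely many pairwise disjoint rigid embedded discs supporting
the precrossings.  Each disc meets the link exactly in its two diameters, and
the curves are embedded except for the double points at the disc centres. -/
structure SpatialPseudoLink (M : Type) [TopologicalSpace M] where
  n : ℕ
  comp : Fin n → C(S1, M)
  d : ℕ
  disc : Fin d → C(PseudoDiagram.ModelDisc, M)
  disc_inj : ∀ k, Function.Injective (disc k)
  disc_disjoint : ∀ k l, k ≠ l → Set.range (disc k) ∩ Set.range (disc l) = ∅
  meets : ∀ k, (⋃ i, Set.range (comp i)) ∩ Set.range (disc k) =
      disc k '' PseudoDiagram.diamPts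
  emb : ∀ x y : Fin n × S1, x ≠ y → comp x.1 x.2 = comp y.1 y.2 →
      ∃ k, comp x.1 x.2 = disc k PseudoDiagram.discCenter

namespace SpatialPseudoLink

variable {M : Type} [TopologicalSpace M]

/-- `L2` is the image of `L1` under the homeomorphism `h`: curves map to
curves and (rigid) precrossing discs map to precrossing discs. -/
def MappedBy (h : M ≃ₜ M) (L1 L2 : SpatialPseudoLink M) : Prop :=
  (∃ e : Fin L1.n ≃ Fin L2.n, ∀ i,
      Set.range (L2.comp (e i)) = h '' Set.range (L1.comp i)) ∧
  (∃ ed : Fin L1.d ≃ Fin L2.d, ∀ k,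
      Set.range (L2.disc (ed k)) = h '' Set.range (L1.disc k) ∧
      L2.disc (ed k) PseudoDiagram.discCenter = h (L1.disc k PseudoDiagram.discCenter))

/-- Isotopy of spatial pseudo links: an ambient isotopy of `M` relating the
two links, respecting arcs and rigid precrossing discs. -/
def Isotopic (L1 L2 : SpatialPseudoLink M) : Prop :=
  ∃ H : C(I01 × M, M),
    (∀ x, H (0, x) = x) ∧
    (∀ t, ∃ h : M ≃ₜ M, ∀ x, H (t, x) = h x) ∧
    ∃ h : M ≃ₜ M, (∀ x, H (1, x) = h x) ∧ MappedBy h L1 L2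

end SpatialPseudoLink

/-- A spatial pseudo link in a thickened surface `S × R` projects (along the
first factor, i.e. onto `S × {0}`) to the pseudo link diagram `D`:
the curves of `D` are the projections of the curves of the link, the
precrossings of `D` are exactly the projections of the centres of the rigid
precrossing discs, and at every classical crossing the over-strand is the
strand with the larger `R`-coordinate. -/
def ProjectsTo {S R : Type} [TopologicalSpace S] [TopologicalSpace R] [Preorder R]
    (L : SpatialPseudoLink (S × R)) (D : PseudoDiagram S) : Prop :=
  ∃ e : Fin L.n ≃ Fin D.n,
    (∀ i t, D.comp (e i) t = (L.comp i t).1) ∧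
    (∀ p, p ∈ D.preSet ↔ ∃ k, (L.disc k PseudoDiagram.discCenter).1 = p) ∧
    (∀ p i t, D.overStr p = some (i, t) → ∀ j s, (j, s) ≠ (i, t) → D.comp j s = p →
      (L.comp (e.symm j) s).2 ≤ (L.comp (e.symm i) t).2)

/-! ### Mixed pseudo links and mixed pseudo link diagrams -/

/-- A mixed pseudo link in `S³` with point-wise fixed part prescribed by the
(marked) subsets `Gm` and `Gl` of `S³` (for `O`-mixed pseudo links take
`Gm` the standard unknot and `Gl = ∅`; for `H`-mixed pseudo links take `Gm`,
`Gl` the two marked components of the Hopf link).  No precrossing disc meets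
the fixed part. -/
structure MixedPseudoLink (Gm Gl : Set S3) where
  toLink : SpatialPseudoLink S3
  idxM : Set (Fin toLink.n)
  idxL : Set (Fin toLink.n)
  unionM : (⋃ i ∈ idxM, Set.range (toLink.comp i)) = Gm
  unionL : (⋃ i ∈ idxL, Set.range (toLink.comp i)) = Gl
  disc_moving : ∀ k (i : Fin toLink.n), i ∈ idxM ∪ idxL →
      Set.range (toLink.disc k) ∩ Set.range (toLink.comp i) = ∅

namespace MixedPseudoLink

/-- `W2` is the image of `W1` under a homeomorphism of `S³`, respecting the
marking of the fixed components. -/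
def MappedBy {W1m W1l W2m W2l : Set S3} (h : S3 ≃ₜ S3)
    (W1 : MixedPseudoLink W1m W1l) (W2 : MixedPseudoLink W2m W2l) : Prop :=
  ∃ e : Fin W1.toLink.n ≃ Fin W2.toLink.n,
    (∀ i, Set.range (W2.toLink.comp (e i)) = h '' Set.range (W1.toLink.comp i)) ∧
    e '' W1.idxM = W2.idxM ∧ e '' W1.idxL = W2.idxL ∧
    ∃ ed : Fin W1.toLink.d ≃ Fin W2.toLink.d, ∀ k,
      Set.range (W2.toLink.disc (ed k)) = h '' Set.range (W1.toLink.disc k) ∧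
      W2.toLink.disc (ed k) PseudoDiagram.discCenter =
        h (W1.toLink.disc k PseudoDiagram.discCenter)

/-- Isotopy of mixed pseudo links: ambient isotopy of `S³` keeping the fixed
part pointwise fixed at all times. -/
def Isotopic {Gm Gl : Set S3} (W1 W2 : MixedPseudoLink Gm Gl) : Prop :=
  ∃ H : C(I01 × S3, S3),
    (∀ x, H (0, x) = x) ∧
    (∀ t, ∃ h : S3 ≃ₜ S3, ∀ x, H (t, x) = h x) ∧
    (∀ t, ∀ x ∈ Gm ∪ Gl, H (t, x) = x) ∧
    ∃ h : S3 ≃ₜ S3, (∀ x, H (1, x) = h x) ∧ MappedBy h W1 W2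

/-- `W1` and `W2` are related by an ambient isotopy of `S³` (not necessarily
fixing anything; used to bring a mixed link into a standard position). -/
def RepositionedTo {W1m W1l W2m W2l : Set S3}
    (W1 : MixedPseudoLink W1m W1l) (W2 : MixedPseudoLink W2m W2l) : Prop :=
  ∃ H : C(I01 × S3, S3),
    (∀ x, H (0, x) = x) ∧
    (∀ t, ∃ h : S3 ≃ₜ S3, ∀ x, H (t, x) = h x) ∧
    ∃ h : S3 ≃ₜ S3, (∀ x, H (1, x) = h x) ∧ MappedBy h W1 W2

end MixedPseudoLink

/-- A mixed pseudo link diagram in the plane with point-wise fixed part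
prescribed by the subsets `FM`, `FL` of the plane.  No precrossing involves a
strand of the fixed part. -/
structure MixedDiagram (FM FL : Set Plane) where
  toDiagram : PseudoDiagram Plane
  idxM : Set (Fin toDiagram.n)
  idxL : Set (Fin toDiagram.n)
  unionM : (⋃ i ∈ idxM, Set.range (toDiagram.comp i)) = FM
  unionL : (⋃ i ∈ idxL, Set.range (toDiagram.comp i)) = FL
  pre_moving : ∀ p ∈ toDiagram.preSet, ∀ x : Fin toDiagram.n × S1,
      toDiagram.comp x.1 x.2 = p → x.1 ∉ idxM ∪ idxL

namespace MixedDiagram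

/-- Mixed pseudo Reidemeister equivalence of mixed pseudo link diagrams:
generated by planar isotopies keeping the fixed part pointwise fixed, the
moves R1, R2, R3, PR1, PR2, PR3, PR3' performed away from the fixed part,
and the mixed Reidemeister moves MR2, MR3, MPR3 (whose supporting disc meets
the fixed part; in the case of a fixed Hopf link this includes the mixed R3
move of a moving strand across the fixed crossing of H). -/
def Equiv {FM FL : Set Plane} (E1 E2 : MixedDiagram FM FL) : Prop :=
  Relation.EqvGen
    (fun A B =>
      PseudoDiagram.IsotopicFixing (FM ∪ FL) A.toDiagram B.toDiagram ∨
      (∃ k ∈ PseudoDiagram.pseudoKinds,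
        PseudoDiagram.IsMoveTo k (fun Bs => Bs ∩ (FM ∪ FL) = ∅) A.toDiagram B.toDiagram) ∨
      (∃ k ∈ PseudoDiagram.mixedKinds,
        PseudoDiagram.IsMoveTo k (fun Bs => Bs ∩ (FM ∪ FL) ≠ ∅) A.toDiagram B.toDiagram))
    E1 E2

/-- The corresponding equivalence of mixed link diagrams without precrossings:
generated by fixed-part-preserving isotopy, R1, R2, R3 away from the fixed part
and the mixed moves MR2, MR3. -/
def ClassicalEquiv {FM FL : Set Plane} (E1 E2 : MixedDiagram FM FL) : Prop :=
  Relation.EqvGen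
    (fun A B =>
      PseudoDiagram.IsotopicFixing (FM ∪ FL) A.toDiagram B.toDiagram ∨
      (∃ k ∈ PseudoDiagram.classicalKinds,
        PseudoDiagram.IsMoveTo k (fun Bs => Bs ∩ (FM ∪ FL) = ∅) A.toDiagram B.toDiagram) ∨
      (∃ k ∈ PseudoDiagram.classicalMixedKinds,
        PseudoDiagram.IsMoveTo k (fun Bs => Bs ∩ (FM ∪ FL) ≠ ∅) A.toDiagram B.toDiagram))
    E1 E2

/-- The weighted resolution set of a mixed pseudo link diagram: the classes are
mixed link classes (the fixed part is carried along unchanged). -/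
def WeRe {FM FL : Set Plane} (E : MixedDiagram FM FL) :
    Set (Quot (ClassicalEquiv (FM := FM) (FL := FL)) × ℝ) :=
  {x | (∃ c ∈ E.toDiagram.Choices, ∃ E' : MixedDiagram FM FL,
          E.toDiagram.Resolves c E'.toDiagram ∧ Quot.mk ClassicalEquiv E' = x.1) ∧
    x.2 = (({c | c ∈ E.toDiagram.Choices ∧ ∃ E' : MixedDiagram FM FL,
              E.toDiagram.Resolves c E'.toDiagram ∧ Quot.mk ClassicalEquiv E' = x.1}).ncard : ℝ) /
            2 ^ E.toDiagram.preSet.ncard}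

end MixedDiagram

/-- A mixed pseudo link in `S³` projects to the mixed pseudo link diagram `E`
(the fixed part avoids the point at infinity and projects onto the fixed part
of the diagram, precrossings of the diagram are exactly the projected disc
centres, and over-strands are the strands of larger height). -/
def MixedProjectsTo {Gm Gl : Set S3} {FM FL : Set Plane}
    (W : MixedPseudoLink Gm Gl) (E : MixedDiagram FM FL) : Prop :=
  ∃ e : Fin W.toLink.n ≃ Fin E.toDiagram.n, ∃ ht : Fin W.toLink.n → S1 → ℝ,
    (∀ i t, W.toLink.comp i t = toS3 (E.toDiagram.comp (e i) t, ht i t)) ∧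
    e '' W.idxM = E.idxM ∧ e '' W.idxL = E.idxL ∧
    (∀ p, p ∈ E.toDiagram.preSet ↔
      ∃ k z, W.toLink.disc k PseudoDiagram.discCenter = toS3 (p, z)) ∧
    (∀ p i t, E.toDiagram.overStr p = some (i, t) → ∀ j s, (j, s) ≠ (i, t) →
      E.toDiagram.comp j s = p → ht (e.symm j) s ≤ ht (e.symm i) t)

/-! ### Standard fixed parts and standard embeddings -/

/-- The standard unknotted circle in the plane (the diagram of `O`). -/
def OdiagSet : Set Plane := {p | p.1 ^ 2 + p.2 ^ 2 = 1}

/-- The standard unknot `O` in `S³` (the unit circle in the plane `z = 0`),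
representing the complementary solid torus. -/
def Oset3 : Set S3 := {x | ∃ p ∈ OdiagSet, x = toS3 (p, 0)}

/-- squashing homeomorphism `ℝ ≃ (-1,1)`. -/
def squash (y : ℝ) : ℝ := y / (1 + |y|)

/-- The standard embedding of the solid torus `A × I` in `S³ ∖ O`
(a tube around a vertical circle piercing the disc spanned by `O`). -/
def stEmbed (a : Annulus × I01) : Space :=
  ((1 + (1 / 4 + squash a.1.2 / 32) * (circleMapE a.1.1).1, ((a.2 : ℝ) - 1 / 2) / 16),
    (1 / 4 + squash a.1.2 / 32) * (circleMapE a.1.1).2)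

/-- The `m`-marked component of the standard Hopf link `H` in `S³`:
the unit circle in the plane `z = 0`. -/
def HmSet : Set S3 := {x | ∃ p ∈ OdiagSet, x = toS3 (p, 0)}

/-- The `l`-marked component of the standard Hopf link `H` in `S³`:
the `z`-axis together with the point at infinity. -/
def HlSet : Set S3 :=
  {x | x = OnePoint.infty ∨ ∃ z : ℝ, x = toS3 ((0, 0), z)}

/-- The standard embedding of the thickened torus `T × I` in the complement of
the Hopf link `H = Hm ∪ Hl` in `S³` (a shell around the torus of revolution
about the `z`-axis through the unit circle). -/
def ttEmbed (a : Torus × I01) : Space :=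
  (((1 + ((1 + (a.2 : ℝ)) / 8) * (circleMapE a.1.2).1) * (circleMapE a.1.1).1,
      (1 + ((1 + (a.2 : ℝ)) / 8) * (circleMapE a.1.2).1) * (circleMapE a.1.1).2),
    ((1 + (a.2 : ℝ)) / 8) * (circleMapE a.1.2).2)

/-- The first (marked `m`) component of the standard planar diagram of the
Hopf link. -/
def HdiagM : Set Plane := {p | (p.1 + 1) ^ 2 + p.2 ^ 2 = 2}

/-- The second (marked `l`) component of the standard planar diagram of the
Hopf link. -/
def HdiagL : Set Plane := {p | (p.1 - 1) ^ 2 + p.2 ^ 2 = 2}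

/-- The lift of the `m`-component of the Hopf diagram to `S³` (at height `0`). -/
def HspM : Set S3 := {x | ∃ p ∈ HdiagM, x = toS3 (p, 0)}

/-- The lift of the `l`-component of the Hopf diagram to `S³` (with heights
realizing the over/under data of the standard Hopf diagram: the `l`-component
passes under at `(0,1)` and over at `(0,-1)`). -/
def HspL : Set S3 := {x | ∃ p ∈ HdiagL, x = toS3 (p, -p.2 / 8)}

/-- An `H`-mixed pseudo link diagram: a mixed pseudo link diagram whose fixed
part is the standard (marked) diagram of the Hopf link, with its two crossings
`(0,1)` and `(0,-1)` carrying the standard over/under information. -/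
structure HMixedDiagram extends MixedDiagram HdiagM HdiagL where
  over_top : ∃ x, toDiagram.overStr ((0 : ℝ), (1 : ℝ)) = some x ∧ x.1 ∈ idxM
  over_bot : ∃ x, toDiagram.overStr ((0 : ℝ), (-1 : ℝ)) = some x ∧ x.1 ∈ idxL

/-- `H`-mixed pseudo Reidemeister equivalence. -/
def HMixedDiagram.Equiv (E1 E2 : HMixedDiagram) : Prop :=
  MixedDiagram.Equiv E1.toMixedDiagram E2.toMixedDiagram

/-- A pseudo link in a thickened surface corresponds, via the embedding
`ι : Mt → ℝ³ ⊂ S³`, to the mixed pseudo link `W`: the moving part of `W` is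
the image of `L` under `ι`. -/
def CorrVia {Mt : Type} [TopologicalSpace Mt] (ι : Mt → Space) {Gm Gl : Set S3}
    (L : SpatialPseudoLink Mt) (W : MixedPseudoLink Gm Gl) : Prop :=
  (∃ e : Fin L.n → Fin W.toLink.n, Function.Injective e ∧
      (∀ i, e i ∉ W.idxM ∪ W.idxL) ∧
      (∀ j, j ∉ W.idxM ∪ W.idxL → ∃ i, e i = j) ∧
      ∀ i t, W.toLink.comp (e i) t = toS3 (ι (L.comp i t))) ∧
  (∃ ed : Fin L.d ≃ Fin W.toLink.d, ∀ k x,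
      W.toLink.disc (ed k) x = toS3 (ι (L.disc k x)))

/-- A pseudo link in `Mt` corresponds, via an embedding `ι : Mt → Nt`, to a
pseudo link in `Nt`. -/
def CorrPlain {Mt Nt : Type} [TopologicalSpace Mt] [TopologicalSpace Nt] (ι : Mt → Nt)
    (L : SpatialPseudoLink Mt) (L' : SpatialPseudoLink Nt) : Prop :=
  (∃ e : Fin L.n ≃ Fin L'.n, ∀ i t, L'.comp (e i) t = ι (L.comp i t)) ∧
  (∃ ed : Fin L.d ≃ Fin L'.d, ∀ k x, L'.disc (ed k) x = ι (L.disc k x))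

/-- A diagram in the surface `S` is regarded as a diagram in the surface `T`
via the inclusion `j : S → T` (curves and crossing labels transported). -/
def IncludedAs {S T : Type} [TopologicalSpace S] [TopologicalSpace T] (j : S → T)
    (D : PseudoDiagram S) (DT : PseudoDiagram T) : Prop :=
  ∃ e : Fin D.n ≃ Fin DT.n,
    (∀ i t, DT.comp (e i) t = j (D.comp i t)) ∧
    (∀ p, DT.overStr (j p) = Option.map (fun x : Fin D.n × S1 => (e x.1, x.2)) (D.overStr p))

end PKT

/- A pseudo Reidemeister sequence between classical diagrams is turned into a classical one by
resolving every precrossing of every diagram in it.  Resolution commutes with the steps: an ambient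
isotopy carries a resolution of its source to a resolution of its target, and resolving all
precrossings inside the supporting disc of a move R1, R2, R3, PR1, PR2, PR3, PR3' turns it into a
move with the same boundary and no precrossings, that is, into an R1, R2 or R3 move.  A classical
diagram is its own resolution, and any resolution of it differs from it only by a relabelling of
its components. -/

theorem Relation.EqvGen.exists_lift {α β : Type*} {r : α → α → Prop} {s : β → β → Prop}
    {R : α → β → Prop} [Std.Symm r] (lift : ∀ ⦃a b a'⦄, r a b → R a a' → ∃ b', R b b' ∧ s a' b')
    {a b : α} (h : Relation.EqvGen r a b) {a' : β} (ha : R a a') :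
    ∃ b', R b b' ∧ Relation.EqvGen s a' b' := by
  rw [Relation.EqvGen.eqvGen_eq_reflTransGen] at h
  induction h with
  | refl => exact ⟨a', ha, .refl _⟩
  | tail _ hbc ih =>
    obtain ⟨b', hb, hab⟩ := ih
    obtain ⟨c', hc, hbc'⟩ := lift hbc hb
    exact ⟨c', hc, hab.trans _ _ _ (.rel _ _ hbc')⟩

namespace PKT

namespace PseudoDiagram

variable {S : Type} [TopologicalSpace S]

lemma map_mem_doublePts {T : Type} [TopologicalSpace T] {n m : ℕ} {c : Fin n → C(S1, S)}
    {c' : Fin m → C(S1, T)} {e : Fin n → Fin m} (he : Function.Injective e) (g : S → T)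
    (hc : ∀ i t, c' (e i) t = g (c i t)) {p : S} (hp : p ∈ doublePts c) :
    g p ∈ doublePts c' := by
  obtain ⟨x, y, hxy, rfl, hy⟩ := hp
  refine ⟨(e x.1, x.2), (e y.1, y.2), ?_, hc _ _, by rw [hc, hy]⟩
  simp only [ne_eq, Prod.mk.injEq, he.eq_iff]
  exact fun h => hxy (Prod.ext h.1 h.2)

lemma doublePts_reindex {n m : ℕ} (e : Fin n ≃ Fin m) {c : Fin n → C(S1, S)}
    {c' : Fin m → C(S1, S)} (hc : ∀ i t, c' (e i) t = c i t) : doublePts c' = doublePts c := by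
  have hc' : ∀ j t, c (e.symm j) t = c' j t := fun j t => by rw [← hc, e.apply_symm_apply]
  ext p
  exact ⟨map_mem_doublePts e.symm.injective id hc', map_mem_doublePts e.injective id hc⟩

lemma union_reindex {n m : ℕ} (e : Fin n ≃ Fin m) {c : Fin n → C(S1, S)}
    {c' : Fin m → C(S1, S)} (hc : ∀ i t, c' (e i) t = c i t) :
    (⋃ i, Set.range (c' i)) = ⋃ i, Set.range (c i) := by
  ext x
  simp only [Set.mem_iUnion, Set.mem_range]
  constructor
  · rintro ⟨i, t, rfl⟩
    exact ⟨e.symm i, t, by rw [← hc, e.apply_symm_apply]⟩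
  · rintro ⟨i, t, rfl⟩
    exact ⟨e i, t, hc i t⟩

lemma IsClassical.overStr_eq_none_iff {D : PseudoDiagram S} (hD : D.IsClassical) {p : S} :
    D.overStr p = none ↔ p ∉ D.doubles := by
  refine ⟨fun hp hd => (hD ▸ ⟨hd, hp⟩ : p ∈ (∅ : Set S)), fun hd => ?_⟩
  by_contra hne
  obtain ⟨x, hx⟩ := Option.ne_none_iff_exists'.mp hne
  exact hd (D.over_spec p x hx).2

lemma IsClassical.classicalSet_eq {D : PseudoDiagram S} (hD : D.IsClassical) :
    D.classicalSet = D.doubles := by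
  ext p
  simp only [classicalSet, Set.mem_ofPred_eq, ne_eq, hD.overStr_eq_none_iff, not_not, and_self]

lemma ncard_doubles_inter (D : PseudoDiagram S) (B : Set S) :
    (D.doubles ∩ B).ncard = (D.classicalSet ∩ B).ncard + (D.preSet ∩ B).ncard := by
  have hsplit : D.doubles ∩ B = D.classicalSet ∩ B ∪ D.preSet ∩ B := by
    ext p
    simp only [classicalSet, preSet, Set.mem_inter_iff, Set.mem_union, Set.mem_ofPred_eq]
    tauto
  rw [hsplit, Set.ncard_union_eq (Set.disjoint_left.mpr fun p hc hpre => hc.1.2 hpre.1.2)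
    (D.finite_doubles.subset fun p hp => hp.1.1) (D.finite_doubles.subset fun p hp => hp.1.1)]

/-- A full resolution of `D`, recorded by its outcome rather than by the choice of an over-strand
at each precrossing. -/
def IsResolution (D D' : PseudoDiagram S) : Prop :=
  ∃ e : Fin D.n ≃ Fin D'.n, (∀ i t, D'.comp (e i) t = D.comp i t) ∧
    (∀ p x, D.overStr p = some x → D'.overStr p = some (e x.1, x.2)) ∧ D'.IsClassical

namespace IsResolution

variable {D D' : PseudoDiagram S}

lemma isClassical (hr : IsResolution D D') : D'.IsClassical := by
  obtain ⟨-, -, -, hcl⟩ := hr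
  exact hcl

lemma doubles_eq (hr : IsResolution D D') : D'.doubles = D.doubles := by
  obtain ⟨e, hc, -⟩ := hr
  exact doublePts_reindex e hc

lemma union_eq (hr : IsResolution D D') : D'.union = D.union := by
  obtain ⟨e, hc, -⟩ := hr
  exact union_reindex e hc

lemma overStr_eq_none_iff (hr : IsResolution D D') {p : S} :
    D'.overStr p = none ↔ p ∉ D.doubles := by
  rw [hr.isClassical.overStr_eq_none_iff, hr.doubles_eq]

lemma localPattern (hr : IsResolution D D') {B : Set S} {cp : ℕ × ℕ}
    (hB : D.LocalPattern B cp) : D'.LocalPattern B (cp.1 + cp.2, 0) := by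
  refine ⟨?_, by rw [hr.isClassical, Set.empty_inter, Set.ncard_empty]⟩
  rw [hr.isClassical.classicalSet_eq, hr.doubles_eq, ncard_doubles_inter, hB.1, hB.2]

end IsResolution

lemma isResolution_self {D : PseudoDiagram S} (hD : D.IsClassical) : IsResolution D D :=
  ⟨Equiv.refl _, fun _ _ => rfl, fun _ _ hx => hx, hD⟩

lemma exists_isResolution (D : PseudoDiagram S) : ∃ D', IsResolution D D' := by
  classical
  have hstrand : ∀ p ∈ D.doubles, ∃ x : Fin D.n × S1, D.comp x.1 x.2 = p :=
    fun p ⟨x, _, _, hx, _⟩ => ⟨x, hx⟩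
  choose strand hstrand using hstrand
  let ov : S → Option (Fin D.n × S1) := fun p =>
    (D.overStr p).or (if hp : p ∈ D.doubles then some (strand p hp) else none)
  have hov : ∀ p x, ov p = some x → D.comp x.1 x.2 = p ∧ p ∈ doublePts D.comp := by
    intro p x hx
    cases hp : D.overStr p with
    | some y =>
      simp only [ov, hp, Option.some_or, Option.some.injEq] at hx
      exact hx ▸ D.over_spec p y hp
    | none =>
      by_cases hd : p ∈ D.doubles
      · simp only [ov, hp, hd, Option.none_or, dite_true, Option.some.injEq] at hx
        exact hx ▸ ⟨hstrand p hd, hd⟩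
      · simp [ov, hp, hd] at hx
  refine ⟨{ D with overStr := ov, over_spec := hov }, Equiv.refl _, fun _ _ => rfl,
    fun p x hx => by simp [ov, hx], Set.eq_empty_of_forall_notMem ?_⟩
  rintro p ⟨hd, hp⟩
  simp only [ov, Option.or_eq_none_iff, dite_eq_right_iff, reduceCtorEq, imp_false] at hp
  exact hp.2 hd

lemma MappedBy.symm {h : S ≃ₜ S} {D1 D2 : PseudoDiagram S} (hm : MappedBy h D1 D2) :
    MappedBy h.symm D2 D1 := by
  obtain ⟨e, hcomp, hover⟩ := hm
  refine ⟨e.symm, fun i t => ?_, fun p => ?_⟩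
  · rw [← h.symm_apply_apply (D1.comp _ t), ← hcomp, e.apply_symm_apply]
  · rw [← h.apply_symm_apply p, hover, h.symm_apply_apply, Option.map_map]
    cases D1.overStr (h.symm p) <;> simp

lemma MappedBy.mem_doubles_iff {h : S ≃ₜ S} {D1 D2 : PseudoDiagram S} (hm : MappedBy h D1 D2)
    {p : S} : h p ∈ D2.doubles ↔ p ∈ D1.doubles := by
  obtain ⟨e', hcomp', -⟩ := hm.symm
  obtain ⟨e, hcomp, -⟩ := hm
  exact ⟨fun hp => h.symm_apply_apply p ▸ map_mem_doublePts e'.injective h.symm hcomp' hp,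
    map_mem_doublePts e.injective h hcomp⟩

lemma MappedBy.exists_isResolution {h : S ≃ₜ S} {A B A' : PseudoDiagram S} (hm : MappedBy h A B)
    (hA : IsResolution A A') : ∃ B', IsResolution B B' ∧ MappedBy h A' B' := by
  have hdoubles : ∀ q, q ∈ B.doubles ↔ h.symm q ∈ A'.doubles := fun q => by
    rw [hA.doubles_eq, ← hm.mem_doubles_iff, h.apply_symm_apply]
  obtain ⟨e, hcomp, hover⟩ := hm
  obtain ⟨eA, hcompA, hkeep, hcl⟩ := hA
  let f : Fin A'.n × S1 → Fin B.n × S1 := fun x => (e (eA.symm x.1), x.2)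
  have hf : ∀ x, B.comp (f x).1 (f x).2 = h (A'.comp x.1 x.2) := fun x => by
    simp only [f, hcomp, ← hcompA, eA.apply_symm_apply]
  let ov : S → Option (Fin B.n × S1) := fun q => (A'.overStr (h.symm q)).map f
  have hov : ∀ q x, ov q = some x → B.comp x.1 x.2 = q ∧ q ∈ doublePts B.comp := by
    intro q x hx
    obtain ⟨y, hy, rfl⟩ := Option.map_eq_some_iff.mp hx
    obtain ⟨hyq, hyd⟩ := A'.over_spec _ y hy
    exact ⟨by rw [hf, hyq, h.apply_symm_apply], (hdoubles q).mpr hyd⟩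
  refine ⟨{ B with overStr := ov, over_spec := hov }, ⟨Equiv.refl _, fun _ _ => rfl, ?_, ?_⟩,
    ⟨eA.symm.trans e, fun i t => (hf (i, t)).trans rfl, fun p => ?_⟩⟩
  · intro q x hx
    rw [← h.apply_symm_apply q, hover] at hx
    obtain ⟨y, hy, rfl⟩ := Option.map_eq_some_iff.mp hx
    simp [ov, f, hkeep _ y hy]
  · refine Set.eq_empty_of_forall_notMem fun q ⟨hq, hnone⟩ => ?_
    have : A'.overStr (h.symm q) = none := Option.map_eq_none_iff.mp hnone
    exact (hcl.overStr_eq_none_iff.mp this) ((hdoubles q).mp hq)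
  · simp only [ov, h.symm_apply_apply]
    rfl

lemma IsotopicFixing.exists_isResolution {F : Set S} {A B A' : PseudoDiagram S}
    (hiso : IsotopicFixing F A B) (hA : IsResolution A A') :
    ∃ B', IsResolution B B' ∧ IsotopicFixing F A' B' := by
  obtain ⟨H, H0, Ht, Hfix, h, H1, hm⟩ := hiso
  obtain ⟨B', hB, hm'⟩ := hm.exists_isResolution hA
  exact ⟨B', hB, H, H0, Ht, Hfix, h, H1, hm'⟩

lemma SurfaceIsotopic.symm {D1 D2 : PseudoDiagram S} (hiso : SurfaceIsotopic D1 D2) :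
    SurfaceIsotopic D2 D1 := by
  obtain ⟨H, H0, Ht, -, h, H1, hm⟩ := hiso
  refine ⟨⟨fun p => H (unitInterval.symm p.1, h.symm p.2), by fun_prop⟩, fun s => ?_,
    fun t => ?_, fun _ _ hs => absurd hs (Set.notMem_empty _), h.symm, fun s => ?_, hm.symm⟩
  · simp [H1]
  · obtain ⟨g, hg⟩ := Ht (unitInterval.symm t)
    exact ⟨h.symm.trans g, fun s => hg _⟩
  · simp [H0]

lemma surfaceIsotopic_of_mappedBy_refl {D1 D2 : PseudoDiagram S}
    (hm : MappedBy (Homeomorph.refl S) D1 D2) : SurfaceIsotopic D1 D2 :=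
  ⟨⟨Prod.snd, continuous_snd⟩, fun _ => rfl, fun _ => ⟨Homeomorph.refl S, fun _ => rfl⟩,
    fun _ _ _ => rfl, Homeomorph.refl S, fun _ => rfl, hm⟩

lemma IsClassical.surfaceIsotopic_of_isResolution {D D' : PseudoDiagram S} (hD : D.IsClassical)
    (hr : IsResolution D D') : SurfaceIsotopic D D' := by
  obtain ⟨e, hcomp, hkeep, -⟩ := id hr
  refine surfaceIsotopic_of_mappedBy_refl ⟨e, hcomp, fun p => ?_⟩
  cases hp : D.overStr p with
  | some x => exact hkeep p x hp
  | none => exact hr.overStr_eq_none_iff.mpr (hD.overStr_eq_none_iff.mp hp)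

lemma SupportedIn.of_isResolution {A B A' B' : PseudoDiagram S} {D : Set S}
    (hs : SupportedIn A B D) (hA : IsResolution A A') (hB : IsResolution B B') :
    SupportedIn A' B' D := by
  obtain ⟨hdisc, hunion, hdoubles, -, hfrontier⟩ := hs
  refine ⟨hdisc, ?_, ?_, fun p hp => ?_, ?_⟩
  · rwa [hA.union_eq, hB.union_eq]
  · rwa [hA.doubles_eq, hB.doubles_eq]
  · rw [hA.overStr_eq_none_iff, hB.overStr_eq_none_iff, not_iff_not]
    exact ⟨fun h => (hdoubles ▸ ⟨h, hp⟩ : p ∈ B.doubles \ D).1,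
      fun h => (hdoubles ▸ ⟨h, hp⟩ : p ∈ A.doubles \ D).1⟩
  · rwa [hA.union_eq, hB.union_eq]

lemma IsMoveTo.of_isResolution {k k' : MoveKind} {P : Set S → Prop} {A B A' B' : PseudoDiagram S}
    (hk : k'.pattern = ((k.pattern.1.1 + k.pattern.1.2, 0),
      (k.pattern.2.1.1 + k.pattern.2.1.2, 0), k.pattern.2.2))
    (hmv : IsMoveTo k P A B) (hA : IsResolution A A') (hB : IsResolution B B') :
    IsMoveTo k' P A' B' := by
  obtain ⟨D, hP, hs, hboundary, hpat⟩ := hmv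
  refine ⟨D, hP, hs.of_isResolution hA hB, by rwa [hk, hA.union_eq], ?_⟩
  rw [hk]
  rcases hpat with ⟨h1, h2⟩ | ⟨h1, h2⟩
  · exact Or.inl ⟨hA.localPattern h1, hB.localPattern h2⟩
  · exact Or.inr ⟨hB.localPattern h1, hA.localPattern h2⟩

end PseudoDiagram

def MoveKind.resolve : MoveKind → MoveKind
  | .r1 | .pr1 => .r1
  | .r2 | .pr2 | .mr2 => .r2
  | .r3 | .pr3 | .pr3' | .mr3 | .mpr3 => .r3

lemma MoveKind.pattern_resolve (k : MoveKind) :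
    k.resolve.pattern = ((k.pattern.1.1 + k.pattern.1.2, 0),
      (k.pattern.2.1.1 + k.pattern.2.1.2, 0), k.pattern.2.2) := by
  cases k <;> rfl

lemma MoveKind.resolve_mem_classicalKinds {k : MoveKind} (hk : k ∈ PseudoDiagram.pseudoKinds) :
    k.resolve ∈ PseudoDiagram.classicalKinds := by
  rcases hk with rfl | rfl | rfl | rfl | rfl | rfl | rfl <;>
    simp [MoveKind.resolve, PseudoDiagram.classicalKinds]

namespace PseudoDiagram

variable {S : Type} [TopologicalSpace S]

/-- The generating relation of `EquivBy ks`. -/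
def EquivStep (ks : Set MoveKind) (A B : PseudoDiagram S) : Prop :=
  SurfaceIsotopic A B ∨ ∃ k ∈ ks, IsMoveTo k (fun _ => True) A B

instance (ks : Set MoveKind) : Std.Symm (EquivStep (S := S) ks) where
  symm _ _
    | .inl hiso => .inl hiso.symm
    | .inr ⟨k, hk, D, hP, ⟨hdisc, hu, hd, ho, hf⟩, hcnt, hpat⟩ =>
      .inr ⟨k, hk, D, hP, ⟨hdisc, hu.symm, hd.symm, fun p hp => (ho p hp).symm, hf.symm⟩,
        hf ▸ hcnt, hpat.symm⟩

lemma EquivStep.exists_isResolution {ks ks' : Set MoveKind} (hks : ∀ k ∈ ks, k.resolve ∈ ks')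
    {A B A' : PseudoDiagram S} (hs : EquivStep ks A B) (hA : IsResolution A A') :
    ∃ B', IsResolution B B' ∧ EquivStep ks' A' B' := by
  rcases hs with hiso | ⟨k, hk, hmv⟩
  · obtain ⟨B', hB, hiso'⟩ := hiso.exists_isResolution hA
    exact ⟨B', hB, .inl hiso'⟩
  · obtain ⟨B', hB⟩ := PseudoDiagram.exists_isResolution B
    exact ⟨B', hB, .inr ⟨k.resolve, hks k hk, hmv.of_isResolution k.pattern_resolve hA hB⟩⟩

lemma EquivBy.exists_isResolution {ks ks' : Set MoveKind} (hks : ∀ k ∈ ks, k.resolve ∈ ks')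
    {A B A' : PseudoDiagram S} (h : EquivBy ks A B) (hA : IsResolution A A') :
    ∃ B', IsResolution B B' ∧ EquivBy ks' A' B' :=
  Relation.EqvGen.exists_lift (r := EquivStep ks)
    (fun _ _ _ hs hA => hs.exists_isResolution hks hA) h hA

lemma EquivBy.mono {ks ks' : Set MoveKind} (hks : ks ⊆ ks') {A B : PseudoDiagram S}
    (h : EquivBy ks A B) : EquivBy ks' A B :=
  Relation.EqvGen.mono (r := EquivStep ks) (fun _ _ hs => hs.imp_right
    fun ⟨k, hk, hmv⟩ => ⟨k, hks hk, hmv⟩) _ _ h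

end PseudoDiagram

/-- There is an injection of classical link types into the
set of planar pseudo link types: the map sending a classical link diagram
(a pseudo link diagram with no precrossings) to its pseudo link equivalence
class is well defined and injective on classical link types; that is, two
classical link diagrams are classically Reidemeister equivalent if and only if
they are pseudo Reidemeister equivalent. -/
theorem classical_links_inject_into_pseudo_links
    (D1 D2 : PseudoDiagram Plane) (h1 : D1.IsClassical) (h2 : D2.IsClassical) :
    PseudoDiagram.ClassicalEquiv D1 D2 ↔ PseudoDiagram.PseudoEquiv D1 D2 := by
  open PseudoDiagram in
  refine ⟨EquivBy.mono (by simp [classicalKinds, pseudoKinds, Set.insert_subset_iff]),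
    fun h => ?_⟩
  obtain ⟨D2', hres, hequiv⟩ := EquivBy.exists_isResolution
    (fun _ hk => MoveKind.resolve_mem_classicalKinds hk) h (isResolution_self h1)
  exact hequiv.trans _ _ _ (.symm _ _ (.rel _ _ (.inl (h2.surfaceIsotopic_of_isResolution hres))))

end PKT
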